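/- Let S ⊆ C be such that for every c ∈ S there exist a rule ρ with conclusion configuration c, premises j_1,…,j_n, and index i ∈ 1..n with j_k inductively derivable for all k < i and C(j_i) ∈ S. Then for every c ∈ S, the judgement c ⇒ ∞ is derivable in the generalised inference system (Rules_∞, coaxioms {c ⇒ ∞}). -/

import Mathlib

/-- Judgements over configurations `C` and extended results `Option R`
    (`none` stands for the special extra result such as `?`, `wrong`, or `∞`). -/
abbrev Judg (C R : Type) := C × Option R

/-- Lift a complete judgement to an extended judgement. -/
def liftJ {C R : Type} (j : C × R) : Judg C R := (j.1, some j.2)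

/-- Bounded-premises condition. -/
def BP {C R : Type} (Rules : Set (List (C × R) × (C × R))) : Prop :=
  ∀ c : C, ∃ b : ℕ, ∀ js res, (js, (c, res)) ∈ Rules → js.length ≤ b

/-- The extended rule set `Rules_?`: original rules (lifted), start axioms
    `c ⇒ ?`, and partial rules. -/
def RulesQ {C R : Type} (Rules : Set (List (C × R) × (C × R))) :
    Set (List (Judg C R) × Judg C R) :=
  { r | (∃ c : C, r = ([], (c, none)))
      ∨ (∃ (js : List (C × R)) (c : C) (res : R), (js, (c, res)) ∈ Rules ∧ r = (js.map liftJ, (c, some res)))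
      ∨ (∃ (js : List (C × R)) (c : C) (res : R) (i : ℕ) (hi : i < js.length) (u : Option R),
          (js, (c, res)) ∈ Rules ∧
          r = ((js.take i).map liftJ ++ [((js[i]'hi).1, u)], (c, none))) }

/-- Ordered trees labelled in `L`: partial functions from positions (lists of
    child indices) to labels, with nonempty, prefix-closed,
    sibling-downward-closed domain. -/
structure OTree (L : Type) where
  label : List ℕ → Option L
  root_isSome : (label []).isSome
  pref : ∀ α n, (label (α ++ [n])).isSome → (label α).isSome
  sib : ∀ α n k, (label (α ++ [n])).isSome → k ≤ n → (label (α ++ [k])).isSome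

/-- A tree is an evaluation tree in a rule set: at every node, the ordered
    children labels together with the node label form a rule. -/
def IsTreeIn {L : Type} (Rules : Set (List L × L)) (t : OTree L) : Prop :=
  ∀ α l, t.label α = some l →
    ∃ ps : List L, (∀ i : ℕ, t.label (α ++ [i]) = ps[i]?) ∧ (ps, l) ∈ Rules

/-- Partial evaluation trees: evaluation trees in `Rules_?`. -/
def IsPET {C R : Type} (Rules : Set (List (C × R) × (C × R)))
    (t : OTree (Judg C R)) : Prop :=
  IsTreeIn (RulesQ Rules) t

/-- The refinement relation `⊑` on trees labelled by possibly-incomplete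
    judgements. -/
def TreeLE {C R : Type} (t t' : OTree (Judg C R)) : Prop :=
  (∀ α, (t.label α).isSome → (t'.label α).isSome) ∧
  ∀ α c u, t.label α = some (c, u) →
    (∃ (u' : Option R), t'.label α = some (c, u')) ∧
    (u.isSome → ∀ β, t.label (α ++ β) = t'.label (α ++ β))

/-- Strict refinement `⊏`. -/
def TreeLT {C R : Type} (t t' : OTree (Judg C R)) : Prop :=
  TreeLE t t' ∧ t ≠ t'

/-- A tree is finite if its domain is finite. -/
def TreeFinite {L : Type} (t : OTree L) : Prop :=
  Set.Finite {α | (t.label α).isSome}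

/-- Well-formedness: every subtree rooted at a complete node is finite. -/
def WellFormed {C R : Type} (t : OTree (Judg C R)) : Prop :=
  ∀ α c r, t.label α = some (c, some r) →
    Set.Finite {β | (t.label (α ++ β)).isSome}

/-- `t` is a least upper bound of the sequence `f` w.r.t. `⊑`. -/
def IsLubSeq {C R : Type} (f : ℕ → OTree (Judg C R)) (t : OTree (Judg C R)) : Prop :=
  (∀ n, TreeLE (f n) t) ∧ ∀ t', (∀ n, TreeLE (f n) t') → TreeLE t t'

/-- Inductive derivability in a rule set with finite-list premises. -/
inductive IndDerives {J : Type} (Rules : Set (List J × J)) : J → Prop where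
  | node (ps : List J) (j : J) : (ps, j) ∈ Rules →
      (∀ p ∈ ps, IndDerives Rules p) → IndDerives Rules j

/-- A set of judgements is consistent w.r.t. a rule set. -/
def ConsistentL {J : Type} (Rules : Set (List J × J)) (X : Set J) : Prop :=
  ∀ j ∈ X, ∃ (ps : List J), (ps, j) ∈ Rules ∧ ∀ p ∈ ps, p ∈ X

/-- Coinductive derivability: membership in some consistent set. -/
def CoDerives {J : Type} (Rules : Set (List J × J)) (j : J) : Prop :=
  ∃ (X : Set J), ConsistentL Rules X ∧ j ∈ X

/-- Derivability in a generalised inference system (rules + corules):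
    membership in a consistent set all of whose elements have a finite
    derivation using both rules and corules. -/
def GenDerives {J : Type} (rules corules : Set (List J × J)) (j : J) : Prop :=
  ∃ (X : Set J), ConsistentL rules X ∧ (∀ x ∈ X, IndDerives (rules ∪ corules) x) ∧ j ∈ X
/-- Trace results: a finite trace paired with a result, or an infinite trace. -/
abbrev TrRes (C R : Type) := (List C × R) ⊕ Stream' C

/-- The trace-extended rule set `Rules_tr`: finite-trace rules and
    infinite-trace rules. -/
def RulesTr {C R : Type} (Rules : Set (List (C × R) × (C × R))) :
    Set (List (C × TrRes C R) × (C × TrRes C R)) :=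
  { r | (∃ (js : List (C × R)) (c : C) (res : R) (σs : List (List C)),
          (js, (c, res)) ∈ Rules ∧ σs.length = js.length ∧
          r = ((js.zip σs).map (fun p => (p.1.1, Sum.inl (p.2, p.1.2))),
               (c, Sum.inl (c :: σs.flatten, res))))
      ∨ (∃ (js : List (C × R)) (c : C) (res : R) (i : ℕ) (hi : i < js.length)
            (σs : List (List C)) (σ : Stream' C),
          (js, (c, res)) ∈ Rules ∧ σs.length = i ∧
          r = (((js.take i).zip σs).map (fun p => (p.1.1, Sum.inl (p.2, p.1.2))) ++
                 [((js[i]'hi).1, Sum.inr σ)],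
               (c, Sum.inr ((c :: σs.flatten) ++ₛ σ)))) }

/-- Equality of rules up to an index `i`: same conclusion configuration, same
    first `i` premises, same configuration in the `(i+1)`-th premise
    (`i` is 0-based here), with a prescribed result `r'` in that premise. -/
def AgreeUpTo {C R : Type} (Rules : Set (List (C × R) × (C × R)))
    (js : List (C × R)) (c : C) (i : ℕ) (hi : i < js.length) (r' : R) : Prop :=
  ∃ (js' : List (C × R)) (res' : R) (hi' : i < js'.length),
    (js', (c, res')) ∈ Rules ∧ js'.take i = js.take i ∧
    (js'[i]'hi').1 = (js[i]'hi).1 ∧ (js'[i]'hi').2 = r'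

/-- The wrong-extended rule set `Rules_wr` over results `R + {wrong}`
    (`none` stands for `wrong`): original rules, wrong-configuration axioms,
    wrong-result rules and wrong-propagation rules. -/
def RulesWr {C R : Type} (Rules : Set (List (C × R) × (C × R))) :
    Set (List (Judg C R) × Judg C R) :=
  { r | (∃ (js : List (C × R)) (c : C) (res : R),
          (js, (c, res)) ∈ Rules ∧ r = (js.map liftJ, (c, some res)))
      ∨ (∃ (c : C), (¬ ∃ (js : List (C × R)) (res : R), (js, (c, res)) ∈ Rules) ∧
          r = ([], (c, none)))
      ∨ (∃ (js : List (C × R)) (c : C) (res : R) (i : ℕ) (hi : i < js.length) (r' : R),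
          (js, (c, res)) ∈ Rules ∧ ¬ AgreeUpTo Rules js c i hi r' ∧
          r = ((js.take i).map liftJ ++ [((js[i]'hi).1, some r')], (c, none)))
      ∨ (∃ (js : List (C × R)) (c : C) (res : R) (i : ℕ) (hi : i < js.length),
          (js, (c, res)) ∈ Rules ∧
          r = ((js.take i).map liftJ ++ [((js[i]'hi).1, none)], (c, none))) }

/-- The divergence-extended rule set `Rules_∞` over results `R + {∞}`
    (`none` stands for `∞`): original rules plus divergence-propagation
    rules. -/
def RulesInf {C R : Type} (Rules : Set (List (C × R) × (C × R))) :
    Set (List (Judg C R) × Judg C R) :=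
  { r | (∃ (js : List (C × R)) (c : C) (res : R),
          (js, (c, res)) ∈ Rules ∧ r = (js.map liftJ, (c, some res)))
      ∨ (∃ (js : List (C × R)) (c : C) (res : R) (i : ℕ) (hi : i < js.length),
          (js, (c, res)) ∈ Rules ∧
          r = ((js.take i).map liftJ ++ [((js[i]'hi).1, none)], (c, none))) }

/-- The coaxioms for divergence: `c ⇒ ∞` for every configuration `c`. -/
def CoAx (C R : Type) : Set (List (Judg C R) × Judg C R) :=
  { r | ∃ (c : C), r = ([], (c, none)) }

/-- The trace-forgetting map: `(σ, r) ↦ r` and `σ^∞ ↦ ∞`. -/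
def uForget {C R : Type} : TrRes C R → Option R :=
  Sum.elim (fun p => some p.2) (fun _ => none)

/-! The judgements `c ⇒ ∞` for `c ∈ S`, together with the lifts of the inductively derivable
judgements, form a set that is consistent for `Rules_∞`: each `c ∈ S` concludes a propagation rule
whose premises before the `i`-th are inductively derivable and whose `i`-th premise is again
`c' ⇒ ∞` with `c' ∈ S`. The set is bounded because every `c ⇒ ∞` is a coaxiom, so bounded
coinduction applies. -/

section InferenceSystems

variable {J J' : Type} {rules rules' : Set (List J × J)}

theorem IndDerives.mono (hsub : rules ⊆ rules') {j : J} (hj : IndDerives rules j) :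
    IndDerives rules' j := by
  induction hj with
  | node ps j hr _ ih => exact .node ps j (hsub hr) ih

theorem IndDerives.map {rulesJ' : Set (List J' × J')} {f : J → J'}
    (hf : ∀ ps j, (ps, j) ∈ rules → (ps.map f, f j) ∈ rulesJ') {j : J}
    (hj : IndDerives rules j) : IndDerives rulesJ' (f j) := by
  induction hj with
  | node ps j hr _ ih =>
    refine .node (ps.map f) (f j) (hf ps j hr) ?_
    simpa only [List.forall_mem_map] using ih

theorem consistentL_setOf_indDerives : ConsistentL rules {j | IndDerives rules j} := by
  rintro j ⟨ps, _, hr, hps⟩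
  exact ⟨ps, hr, hps⟩

theorem ConsistentL.image {rulesJ' : Set (List J' × J')} {f : J → J'}
    (hf : ∀ ps j, (ps, j) ∈ rules → (ps.map f, f j) ∈ rulesJ') {X : Set J}
    (hX : ConsistentL rules X) : ConsistentL rulesJ' (f '' X) := by
  rintro _ ⟨j, hj, rfl⟩
  obtain ⟨ps, hr, hps⟩ := hX j hj
  refine ⟨ps.map f, hf ps j hr, ?_⟩
  simpa only [List.forall_mem_map] using fun p hp => Set.mem_image_of_mem f (hps p hp)

theorem ConsistentL.union_of_forall {A B : Set J} (hB : ConsistentL rules B)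
    (hA : ∀ a ∈ A, ∃ ps : List J, (ps, a) ∈ rules ∧ ∀ p ∈ ps, p ∈ A ∪ B) :
    ConsistentL rules (A ∪ B) := by
  rintro j (hj | hj)
  · exact hA j hj
  · obtain ⟨ps, hr, hps⟩ := hB j hj
    exact ⟨ps, hr, fun p hp => Or.inr (hps p hp)⟩

end InferenceSystems

section Divergence

variable {C R : Type} {Rules : Set (List (C × R) × (C × R))}

theorem liftJ_mem_rulesInf {js : List (C × R)} {j : C × R} (hr : (js, j) ∈ Rules) :
    (js.map liftJ, liftJ j) ∈ RulesInf Rules :=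
  Or.inl ⟨js, j.1, j.2, hr, rfl⟩

theorem propagation_mem_rulesInf {js : List (C × R)} {c : C} {res : R} {i : ℕ}
    (hi : i < js.length) (hr : (js, (c, res)) ∈ Rules) :
    ((js.take i).map liftJ ++ [((js[i]'hi).1, none)], ((c, none) : Judg C R)) ∈ RulesInf Rules :=
  Or.inr ⟨js, c, res, i, hi, hr, rfl⟩

theorem indDerives_rulesInf_liftJ {j : C × R} (hj : IndDerives Rules j) :
    IndDerives (RulesInf Rules) (liftJ j) :=
  hj.map fun _ _ => liftJ_mem_rulesInf

theorem consistentL_rulesInf_image_liftJ :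
    ConsistentL (RulesInf Rules) (liftJ '' {j | IndDerives Rules j}) :=
  consistentL_setOf_indDerives.image fun _ _ => liftJ_mem_rulesInf

theorem indDerives_coAx (rules : Set (List (Judg C R) × Judg C R)) (c : C) :
    IndDerives (rules ∪ CoAx C R) ((c, none) : Judg C R) :=
  .node [] _ (Or.inr ⟨c, rfl⟩) (by simp)

theorem liftJ_mem_image_of_mem_take {js : List (C × R)} {i : ℕ} (hi : i < js.length)
    (hind : ∀ (k : ℕ) (hk : k < i), IndDerives Rules (js[k]'(Nat.lt_trans hk hi)))
    {p : Judg C R} (hp : p ∈ (js.take i).map liftJ) :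
    p ∈ liftJ '' {j | IndDerives Rules j} := by
  obtain ⟨q, hq, rfl⟩ := List.mem_map.mp hp
  obtain ⟨k, hk, rfl⟩ := List.mem_take_iff_getElem.mp hq
  exact ⟨_, hind k (lt_of_lt_of_le hk (min_le_left _ _)), rfl⟩

end Divergence

/-- coinductive proof principle for divergence in the
    corule-based semantics. -/
theorem div_principle {C R : Type}
    (Rules : Set (List (C × R) × (C × R))) (S : Set C)
    (h : ∀ c ∈ S, ∃ (js : List (C × R)) (res : R) (i : ℕ) (hi : i < js.length),
      (js, (c, res)) ∈ Rules ∧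
      (∀ (k : ℕ) (hk : k < i), IndDerives Rules (js[k]'(Nat.lt_trans hk hi))) ∧
      (js[i]'hi).1 ∈ S) :
    ∀ c ∈ S, GenDerives (RulesInf Rules) (CoAx C R) ((c, none) : Judg C R) := by
  intro c hc
  set divergent : Set (Judg C R) := (fun c => (c, none)) '' S
  set derivable : Set (Judg C R) := liftJ '' {j | IndDerives Rules j}
  have hcons : ConsistentL (RulesInf Rules) (divergent ∪ derivable) := by
    refine consistentL_rulesInf_image_liftJ.union_of_forall ?_
    rintro _ ⟨c, hcS, rfl⟩
    obtain ⟨js, res, i, hi, hr, hind, hS⟩ := h c hcS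
    refine ⟨_, propagation_mem_rulesInf hi hr, fun p hp => ?_⟩
    rcases List.mem_append.mp hp with hp | hp
    · exact Or.inr (liftJ_mem_image_of_mem_take hi hind hp)
    · exact Or.inl ⟨_, hS, (List.mem_singleton.mp hp).symm⟩
  have hbounded : ∀ x ∈ divergent ∪ derivable,
      IndDerives (RulesInf Rules ∪ CoAx C R) x := by
    rintro _ (⟨c, -, rfl⟩ | ⟨j, hj, rfl⟩)
    · exact indDerives_coAx _ c
    · exact (indDerives_rulesInf_liftJ hj).mono Set.subset_union_left
  exact ⟨divergent ∪ derivable, hcons, hbounded, Or.inl ⟨c, hc, rfl⟩⟩
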